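/- The linear vector field with components (2x₂ - 6x₃, 3x₃, -2y₂ + 6y₃, -3y₃) (the linear part of v at the origin) admits the rational first integrals (x₂+6x₃)³/x₃² and (y₂+6y₃)³/y₃²: both are annihilated by the derivation defined by this linear vector field. -/

import Mathlib

open MvPolynomial

/-- The linear vector field `(2x₂ - 6x₃, 3x₃, -2y₂ + 6y₃, -3y₃)` on ℂ⁴ (the linear part of
`v` at the origin), as a derivation of ℚ[x₂,x₃,y₂,y₃] (`X 0 = x₂, X 1 = x₃, X 2 = y₂, X 3 = y₃`). -/
noncomputable def wLin : Derivation ℚ (MvPolynomial (Fin 4) ℚ) (MvPolynomial (Fin 4) ℚ) :=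
  mkDerivation ℚ ![2 * X 0 - 6 * X 1, 3 * X 1, -2 * X 2 + 6 * X 3, -3 * X 3]

/-
`x₂ + 6x₃`, `x₃`, `y₂ + 6y₃`, `y₃` are eigenvectors of the linear derivation, with eigenvalues
`2, 3, -2, -3`. A derivation multiplies the `n`-th power of an eigenvector of eigenvalue `a` by
`n a`, so the quotient-rule numerator of `fᵐ / gⁿ` is `(m a - n b) fᵐ gⁿ`; it vanishes since
`3 · 2 = 2 · 3` and `3 · (-2) = 2 · (-3)`.
-/

namespace Derivation

section

variable {R A M : Type*} [CommSemiring R] [CommSemiring A] [AddCommMonoid M] [Algebra R A]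
  [Module A M] [Module R M] (D : Derivation R A M)

@[simp]
theorem map_ofNat (n : ℕ) [n.AtLeastTwo] : D (no_index (OfNat.ofNat n : A)) = 0 := by
  rw [← Nat.cast_ofNat, D.map_natCast]

end

theorem map_pow_of_map_eq_smul {R A : Type*} [CommSemiring R] [CommSemiring A] [Algebra R A]
    (D : Derivation R A A) {f : A} {a : R} (hf : D f = a • f) (n : ℕ) :
    D (f ^ n) = (n * a) • f ^ n := by
  rcases n with _ | n
  · simp
  · rw [leibniz_pow, hf, Nat.add_sub_cancel, smul_eq_mul, mul_smul_comm, ← pow_succ, mul_smul,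
      Nat.cast_smul_eq_nsmul]

theorem map_pow_mul_pow_sub_pow_mul_map_pow_eq_zero {R A : Type*} [CommSemiring R] [CommRing A]
    [Algebra R A] (D : Derivation R A A) {f g : A} {a b : R} (hf : D f = a • f)
    (hg : D g = b • g) {m n : ℕ} (hmn : (m : R) * a = n * b) :
    D (f ^ m) * g ^ n - f ^ m * D (g ^ n) = 0 := by
  rw [D.map_pow_of_map_eq_smul hf, D.map_pow_of_map_eq_smul hg, hmn, smul_mul_assoc,
    mul_smul_comm, sub_self]

end Derivation

theorem wLin_X (i : Fin 4) :
    wLin (X i) = ![2 * X 0 - 6 * X 1, 3 * X 1, -2 * X 2 + 6 * X 3, -3 * X 3] i :=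
  mkDerivation_X ℚ _ i

theorem wLin_X_zero_add_six_mul_X_one : wLin (X 0 + 6 * X 1) = (2 : ℚ) • (X 0 + 6 * X 1) := by
  rw [map_add, Derivation.leibniz, Derivation.map_ofNat, wLin_X, wLin_X, smul_eq_C_mul,
    map_ofNat]
  simp only [Matrix.cons_val, smul_eq_mul]
  ring

theorem wLin_X_one : wLin (X 1) = (3 : ℚ) • X 1 := by
  simp [wLin_X, smul_eq_C_mul, map_ofNat]

theorem wLin_X_two_add_six_mul_X_three :
    wLin (X 2 + 6 * X 3) = (-2 : ℚ) • (X 2 + 6 * X 3) := by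
  rw [map_add, Derivation.leibniz, Derivation.map_ofNat, wLin_X, wLin_X, smul_eq_C_mul,
    map_neg, map_ofNat]
  simp only [Matrix.cons_val, smul_eq_mul]
  ring

theorem wLin_X_three : wLin (X 3) = (-3 : ℚ) • X 3 := by
  simp [wLin_X, smul_eq_C_mul, map_ofNat]

/-- The rational functions `(x₂+6x₃)³/x₃²` and `(y₂+6y₃)³/y₃²` are first integrals of the
linear vector field: the derivation of each fraction along the field vanishes identically.
(For `F = N/D`, `w(F) = 0` on `{D ≠ 0}` iff the quotient-rule numerator
`w(N)·D - N·w(D)` is the zero polynomial.) -/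
theorem first_integrals_linear_part :
    wLin ((X 0 + 6 * X 1) ^ 3) * X 1 ^ 2 - (X 0 + 6 * X 1) ^ 3 * wLin (X 1 ^ 2) = 0 ∧
    wLin ((X 2 + 6 * X 3) ^ 3) * X 3 ^ 2 - (X 2 + 6 * X 3) ^ 3 * wLin (X 3 ^ 2) = 0 :=
  ⟨wLin.map_pow_mul_pow_sub_pow_mul_map_pow_eq_zero wLin_X_zero_add_six_mul_X_one wLin_X_one
      (by norm_num),
    wLin.map_pow_mul_pow_sub_pow_mul_map_pow_eq_zero wLin_X_two_add_six_mul_X_three wLin_X_three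
      (by norm_num)⟩
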